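/- For the function H defined by H(x) = e^{-x}(σ²/2 - π(x)) for x ≤ x_α and H(x) = (1-γ)e^{-x}(σ²/2 - π(x)) for x > x_α, where π(x) = r - r^G + σ²/2 - max(δ(x-β) - r^G, 0), the bound -(r - r^G) ≤ H(x) ≤ δ holds for all x ≥ 0. -/

import Mathlib

/-!
Writing `K = r - r^G > 0` and `M(x) = max (δ(x-β) - r^G) 0`, one has `σ²/2 - π(x) = M(x) - K`, so
`H(x) = t (M(x) - K)` with `t = c e^{-x} ∈ [0, 1]` for `x ≥ 0`, where `c ∈ {1, 1-γ}`. Hence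
`-K ≤ H(x) ≤ t M(x) ≤ e^{-x} M(x)`, and `e^{-x} M(x) ≤ δ e^{-x} (x + 1) ≤ δ` by `x + 1 ≤ e^x`.
-/

namespace Real

theorem exp_neg_mul_add_one_le_one (x : ℝ) : exp (-x) * (x + 1) ≤ 1 := by
  calc exp (-x) * (x + 1) ≤ exp (-x) * exp x := by
        gcongr; exact add_one_le_exp x
    _ = 1 := by rw [← exp_add, neg_add_cancel, exp_zero]

theorem exp_neg_mul_max_sub_le {δ β c x : ℝ} (hδ : 0 ≤ δ) (hβ : 0 ≤ β) (hc : 0 ≤ c) :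
    exp (-x) * max (δ * (x - β) - c) 0 ≤ δ := by
  rw [mul_max_of_nonneg _ _ (exp_pos _).le, mul_zero]
  refine max_le ?_ hδ
  calc exp (-x) * (δ * (x - β) - c) ≤ exp (-x) * (δ * (x + 1)) := by
        gcongr; nlinarith
    _ = δ * (exp (-x) * (x + 1)) := by ring
    _ ≤ δ := mul_le_of_le_one_right hδ (exp_neg_mul_add_one_le_one x)

end Real

theorem neg_le_mul_sub_and_mul_sub_le {t M K δ : ℝ} (ht₀ : 0 ≤ t) (ht₁ : t ≤ 1) (hK : 0 ≤ K)
    (hM : 0 ≤ M) (htM : t * M ≤ δ) : -K ≤ t * (M - K) ∧ t * (M - K) ≤ δ := by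
  constructor <;> nlinarith [mul_nonneg ht₀ hM, mul_nonneg ht₀ hK]

theorem stmt4_general (r rG σ δ β γ : ℝ) (hrG : 0 < rG) (hr : rG < r)
    (hδ : 0 < δ) (hβ : 0 < β) (hγ : γ ∈ Set.Ioo (0:ℝ) 1)
    (xα : ℝ)
    (π : ℝ → ℝ) (hπ : ∀ x, π x = r - rG + σ^2/2 - max (δ*(x-β) - rG) 0)
    (H : ℝ → ℝ)
    (hH1 : ∀ x, x ≤ xα → H x = Real.exp (-x) * (σ^2/2 - π x))
    (hH2 : ∀ x, xα < x → H x = (1-γ) * Real.exp (-x) * (σ^2/2 - π x)) :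
    ∀ x : ℝ, 0 ≤ x → -(r - rG) ≤ H x ∧ H x ≤ δ := by
  intro x hx
  set M := max (δ * (x - β) - rG) 0
  have hM : 0 ≤ M := le_max_right _ _
  have hexpM : Real.exp (-x) * M ≤ δ := Real.exp_neg_mul_max_sub_le hδ.le hβ.le hrG.le
  obtain ⟨c, hc₀, hc₁, hHx⟩ :
      ∃ c : ℝ, 0 ≤ c ∧ c ≤ 1 ∧ H x = c * Real.exp (-x) * (M - (r - rG)) := by
    rcases le_or_gt x xα with h | h
    · exact ⟨1, zero_le_one, le_rfl, by rw [hH1 x h, hπ]; ring⟩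
    · exact ⟨1 - γ, by linarith [hγ.2], by linarith [hγ.1], by rw [hH2 x h, hπ]; ring⟩
  have hexp₁ : Real.exp (-x) ≤ 1 := Real.exp_le_one_iff.mpr (neg_nonpos.mpr hx)
  rw [hHx]
  refine neg_le_mul_sub_and_mul_sub_le (by positivity)
    (mul_le_one₀ hc₁ (Real.exp_pos _).le hexp₁) (sub_nonneg.mpr hr.le) hM ?_
  calc c * Real.exp (-x) * M = c * (Real.exp (-x) * M) := mul_assoc _ _ _
    _ ≤ Real.exp (-x) * M := mul_le_of_le_one_left (by positivity) hc₁
    _ ≤ δ := hexpM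

/-- The bound -(r - r^G) ≤ H(x) ≤ δ for all x ≥ 0, where
H(x) = e^{-x}(σ²/2 - π(x)) for x ≤ x_α and H(x) = (1-γ)e^{-x}(σ²/2 - π(x)) for x > x_α. -/
theorem stmt4 (r rG σ δ β γ α : ℝ) (hrG : 0 < rG) (hr : rG < r) (hσ : 0 < σ)
    (hδ : 0 < δ) (hβ : 0 < β) (hγ : γ ∈ Set.Ioo (0:ℝ) 1) (hα : α ∈ Set.Ioo (0:ℝ) 1)
    (xα : ℝ) (hxα : xα = Real.log (1/α))
    (π : ℝ → ℝ) (hπ : ∀ x, π x = r - rG + σ^2/2 - max (δ*(x-β) - rG) 0)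
    (H : ℝ → ℝ)
    (hH1 : ∀ x, x ≤ xα → H x = Real.exp (-x) * (σ^2/2 - π x))
    (hH2 : ∀ x, xα < x → H x = (1-γ) * Real.exp (-x) * (σ^2/2 - π x)) :
    ∀ x : ℝ, 0 ≤ x → -(r - rG) ≤ H x ∧ H x ≤ δ :=
  stmt4_general r rG σ δ β γ hrG hr hδ hβ hγ xα π hπ H hH1 hH2
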